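/- arccosh(1 − 2c t² / (1 + c t²)) = 2 artanh(√|c| t) for all real t with 0 ≤ √|c| t < 1 and c < 0. -/

import Mathlib

noncomputable def arcosh (x : ℝ) : ℝ := Real.log (x + Real.sqrt (x ^ 2 - 1))

noncomputable def artanh (x : ℝ) : ℝ := (1 / 2) * Real.log ((1 + x) / (1 - x))

theorem arcosh_eq_two_artanh (c t : ℝ) (hc : c < 0)
    (ht0 : 0 ≤ Real.sqrt |c| * t) (ht1 : Real.sqrt |c| * t < 1) :
    arcosh (1 - 2 * c * t ^ 2 / (1 + c * t ^ 2)) =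
      2 * artanh (Real.sqrt |c| * t) := by
  set s := Real.sqrt |c| * t with hs
  have hct : c * t ^ 2 = -(s ^ 2) := by
    have h1 : s ^ 2 = |c| * t ^ 2 := by
      rw [hs, mul_pow, Real.sq_sqrt (abs_nonneg c)]
    rw [h1, abs_of_neg hc]; ring
  clear_value s
  have h1s : (0:ℝ) < 1 - s ^ 2 := by nlinarith
  have h1s' : (0:ℝ) < 1 + c * t ^ 2 := by rw [hct]; linarith
  have hX : 1 - 2 * c * t ^ 2 / (1 + c * t ^ 2) = (1 + s ^ 2) / (1 - s ^ 2) := by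
    rw [show 2 * c * t ^ 2 = 2 * (c * t ^ 2) by ring, hct]
    have hne : 1 + -s ^ 2 ≠ 0 := by nlinarith
    field_simp
    ring
  have hsq : ((1 + s ^ 2) / (1 - s ^ 2)) ^ 2 - 1 = (2 * s / (1 - s ^ 2)) ^ 2 := by
    field_simp; ring
  have hsqrt : Real.sqrt (((1 + s ^ 2) / (1 - s ^ 2)) ^ 2 - 1) = 2 * s / (1 - s ^ 2) := by
    rw [hsq, Real.sqrt_sq (by positivity)]
  have hsum : (1 + s ^ 2) / (1 - s ^ 2) + 2 * s / (1 - s ^ 2) = (1 + s) / (1 - s) := by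
    rw [← add_div]
    rw [div_eq_div_iff (by positivity) (by linarith)]
    ring
  rw [arcosh, artanh, hX, hsqrt, hsum]
  ring
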